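/- Let p be a probability distribution on {0,1}^n, let J be uniform on {1,...,n} independent of p, let Ω_j be the event that X_i = 1 for all i ≠ j, and let S = { j : Pr[X_j = 1 | Ω_j] < 1 - ε } (with the convention that j ∈ S requires Pr[Ω_j] > 0). Then (1/n)·Σ_{j ∈ S} Pr[Ω_j] ≤ 1/(1 - ε + n·ε). -/
import Mathlib


open Finset

/-- `Pr[Ω_j]`: the probability that all boxes except possibly `j` pass. -/
def prOmega (n : ℕ) (p : (Fin n → Bool) → ℝ) (j : Fin n) : ℝ :=
  ∑ x ∈ univ.filter (fun x : Fin n → Bool => ∀ i, i ≠ j → x i = true), p x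

/-- `Pr[all boxes pass]`. -/
def prAll (n : ℕ) (p : (Fin n → Bool) → ℝ) : ℝ :=
  ∑ x ∈ univ.filter (fun x : Fin n → Bool => ∀ i, x i = true), p x

/-- `Pr[box j fails, all others pass]`. -/
def prOnly (n : ℕ) (p : (Fin n → Bool) → ℝ) (j : Fin n) : ℝ :=
  ∑ x ∈ univ.filter (fun x : Fin n → Bool => x j = false ∧ ∀ i, i ≠ j → x i = true), p x

lemma prOmega_eq (n : ℕ) (p : (Fin n → Bool) → ℝ) (j : Fin n) :
    prOmega n p j = prAll n p + prOnly n p j := by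
  unfold prOmega prAll prOnly
  rw [← Finset.sum_filter_add_sum_filter_not
    (univ.filter (fun x : Fin n → Bool => ∀ i, i ≠ j → x i = true)) (fun x => x j = true)]
  congr 1
  · apply Finset.sum_congr _ (fun _ _ => rfl)
    rw [Finset.filter_filter]
    apply Finset.filter_congr
    intro x _
    constructor
    · rintro ⟨h1, h2⟩ i
      by_cases hij : i = j
      · subst hij; exact h2
      · exact h1 i hij
    · intro h; exact ⟨fun i _ => h i, h j⟩
  · apply Finset.sum_congr _ (fun _ _ => rfl)
    rw [Finset.filter_filter]
    apply Finset.filter_congr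
    intro x _
    constructor
    · rintro ⟨h1, h2⟩
      exact ⟨Bool.not_eq_true _ ▸ (by simpa using h2), h1⟩
    · rintro ⟨h1, h2⟩
      exact ⟨h2, by simp [h1]⟩

lemma prOnly_sum_le (n : ℕ) (p : (Fin n → Bool) → ℝ) (hp : ∀ x, 0 ≤ p x)
    (hsum : ∑ x, p x = 1) :
    prAll n p + ∑ j, prOnly n p j ≤ 1 := by
  unfold prAll prOnly
  rw [Finset.sum_filter]
  have hswap : ∀ j : Fin n,
      (∑ x ∈ univ.filter (fun x : Fin n → Bool => x j = false ∧ ∀ i, i ≠ j → x i = true), p x)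
      = ∑ x : Fin n → Bool, (if x j = false ∧ ∀ i, i ≠ j → x i = true then p x else 0) := by
    intro j; rw [Finset.sum_filter]
  simp_rw [hswap]
  rw [Finset.sum_comm, ← Finset.sum_add_distrib, ← hsum]
  apply Finset.sum_le_sum
  intro x _
  by_cases h : ∀ i, x i = true
  · rw [if_pos h]
    have : (∑ j : Fin n, if x j = false ∧ ∀ i, i ≠ j → x i = true then p x else 0) = 0 := by
      apply Finset.sum_eq_zero
      intro j _
      rw [if_neg]
      rintro ⟨h1, _⟩
      rw [h j] at h1; simp at h1
    rw [this, add_zero]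
  · rw [if_neg h, zero_add]
    push_neg at h
    obtain ⟨i, hi⟩ := h
    have hif : x i = false := Bool.not_eq_true _ |>.mp hi
    rw [Finset.sum_eq_single i]
    · split <;> [exact le_refl _; exact hp x]
    · intro j _ hji
      rw [if_neg]
      rintro ⟨_, h2⟩
      exact hi (h2 i (fun hij => hji hij.symm))
    · intro hmem; exact absurd (Finset.mem_univ i) hmem

/-- Core probabilistic statement of cut-and-choose security: the probability that the
tested boxes all pass while the untested box has conditional passing probability
below `1 - ε` is at most `1/(1 - ε + n·ε)`. -/
theorem cut_and_choose_security (n : ℕ) (hn : 1 ≤ n) (ε : ℝ) (hε0 : 0 < ε) (hε1 : ε < 1)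
    (p : (Fin n → Bool) → ℝ) (hp : ∀ x, 0 ≤ p x) (hsum : ∑ x, p x = 1) :
    (1 / (n : ℝ)) *
      ∑ j ∈ univ.filter (fun j : Fin n =>
          0 < prOmega n p j ∧ prAll n p / prOmega n p j < 1 - ε), prOmega n p j
      ≤ 1 / (1 - ε + n * ε) := by
  set S := univ.filter (fun j : Fin n =>
      0 < prOmega n p j ∧ prAll n p / prOmega n p j < 1 - ε) with hS
  set q := prAll n p with hq
  have hq0 : 0 ≤ q := Finset.sum_nonneg (fun x _ => hp x)
  have ha0 : ∀ j, 0 ≤ prOnly n p j := fun j => Finset.sum_nonneg (fun x _ => hp x)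
  have hn' : (0:ℝ) < n := by exact_mod_cast hn
  have hD : (0:ℝ) < 1 - ε + n * ε := by nlinarith
  -- key per-element inequality
  have hkey : ∀ j ∈ S, ε * q ≤ (1 - ε) * prOnly n p j := by
    intro j hj
    rw [hS, Finset.mem_filter] at hj
    obtain ⟨_, hpos, hlt⟩ := hj
    have h1 : q < (1 - ε) * prOmega n p j := by
      rw [div_lt_iff₀ hpos] at hlt
      linarith
    rw [prOmega_eq] at h1
    nlinarith
  set k := S.card with hk
  set T := ∑ j ∈ S, prOnly n p j with hT
  have hT0 : 0 ≤ T := Finset.sum_nonneg (fun j _ => ha0 j)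
  have hTle : T ≤ 1 - q := by
    have h1 := prOnly_sum_le n p hp hsum
    have h2 : T ≤ ∑ j, prOnly n p j :=
      Finset.sum_le_sum_of_subset_of_nonneg (Finset.subset_univ S) (fun j _ _ => ha0 j)
    linarith
  have hksum : (k : ℝ) * (ε * q) ≤ (1 - ε) * T := by
    calc (k : ℝ) * (ε * q) = ∑ _j ∈ S, ε * q := by rw [Finset.sum_const, nsmul_eq_mul]
    _ ≤ ∑ j ∈ S, (1 - ε) * prOnly n p j := Finset.sum_le_sum hkey
    _ = (1 - ε) * T := by rw [hT, Finset.mul_sum]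
  have hsumS : ∑ j ∈ S, prOmega n p j = (k : ℝ) * q + T := by
    calc ∑ j ∈ S, prOmega n p j = ∑ j ∈ S, (q + prOnly n p j) := by
          apply Finset.sum_congr rfl; intro j _; rw [prOmega_eq]
    _ = (k : ℝ) * q + T := by rw [Finset.sum_add_distrib, Finset.sum_const, nsmul_eq_mul]
  rw [hsumS]
  have hkn : (k : ℝ) ≤ n := by
    have h := Finset.card_le_card (Finset.subset_univ S)
    simp only [Finset.card_univ, Fintype.card_fin] at h
    exact_mod_cast h
  rcases Nat.eq_zero_or_pos k with hk0 | hk1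
  · have hSe : S = ∅ := Finset.card_eq_zero.mp hk0
    have hT0' : T = 0 := by rw [hT, hSe, Finset.sum_empty]
    rw [hk0, hT0']
    simp only [Nat.cast_zero, zero_mul, add_zero, mul_zero]
    positivity
  · have hk1' : (1:ℝ) ≤ k := by exact_mod_cast hk1
    rw [div_mul_eq_mul_div, one_mul, div_le_div_iff₀ hn' hD, one_mul]
    nlinarith [mul_nonneg (mul_nonneg hq0 (sub_nonneg.mpr hkn)) hε0.le,
      mul_nonneg hT0 hε0.le, mul_nonneg hq0 hε0.le,
      mul_le_mul_of_nonneg_right hksum hε0.le,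
      mul_le_mul_of_nonneg_right hTle (mul_nonneg hε0.le hε0.le)]
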